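/- Let a_1(n,i) denote the number of 123-avoiding permutations of {1,...,n} with first entry i. Then a_1(n,i) = C(n+i-2, n-1) - C(n+i-2, n), where C denotes binomial coefficients. -/
import Mathlib


def Avoids123 {n : ℕ} (π : Equiv.Perm (Fin n)) : Prop :=
  ¬ ∃ i j k : Fin n, i < j ∧ j < k ∧ π i < π j ∧ π j < π k

noncomputable def a1 (n i : ℕ) : ℕ :=
  Nat.card {π : Equiv.Perm (Fin n) //
    Avoids123 π ∧ ∀ j : Fin n, j.val = 0 → ((π j : Fin n) : ℕ) + 1 = i}

def Dec123 (t : ℕ) {m : ℕ} (e : Equiv.Perm (Fin m)) : Prop :=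
  ∀ j k : Fin m, j < k → t ≤ ((e j : Fin m) : ℕ) → e k < e j

def Good (t : ℕ) {m : ℕ} (e : Equiv.Perm (Fin m)) : Prop :=
  Avoids123 e ∧ Dec123 t e

noncomputable def N (m t : ℕ) : ℕ := Nat.card {e : Equiv.Perm (Fin m) // Good t e}

def Psi {m : ℕ} (p : Fin (m+1)) (e : Equiv.Perm (Fin m)) : Equiv.Perm (Fin (m+1)) :=
  ((finSuccEquiv m).trans (Equiv.optionCongr e)).trans (finSuccEquiv' p).symm

@[simp] lemma Psi_zero {m : ℕ} (p : Fin (m+1)) (e : Equiv.Perm (Fin m)) : Psi p e 0 = p := by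
  simp [Psi]

@[simp] lemma Psi_succ {m : ℕ} (p : Fin (m+1)) (e : Equiv.Perm (Fin m)) (j : Fin m) :
    Psi p e j.succ = p.succAbove (e j) := by
  simp [Psi]

lemma lt_succAbove' {m : ℕ} (p : Fin (m+1)) (x : Fin m) :
    p < p.succAbove x ↔ (p : ℕ) ≤ (x : ℕ) := by
  rw [Fin.lt_succAbove_iff_le_castSucc]
  simp [Fin.le_def]

-- small case
lemma good_psi_small {m t : ℕ} (p : Fin (m+1)) (e : Equiv.Perm (Fin m)) (hp : (p : ℕ) < t) :
    Good t (Psi p e) ↔ Good (p : ℕ) e := by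
  constructor
  · rintro ⟨hA, hD⟩
    constructor
    · rintro ⟨i, j, k, hij, hjk, h1, h2⟩
      exact hA ⟨i.succ, j.succ, k.succ, by simpa using hij, by simpa using hjk,
        by simpa [Fin.succAbove_lt_succAbove_iff] using h1,
        by simpa [Fin.succAbove_lt_succAbove_iff] using h2⟩
    · intro j k hjk hv
      by_contra hc
      have hne : e k ≠ e j := fun h => (Equiv.injective e h ▸ hjk.ne) rfl
      have hlt : e j < e k := lt_of_le_of_ne (not_lt.mp hc) (Ne.symm hne)
      exact hA ⟨0, j.succ, k.succ, Fin.succ_pos j, by simpa using hjk,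
        by simpa using (lt_succAbove' p (e j)).mpr hv,
        by simpa [Fin.succAbove_lt_succAbove_iff] using hlt⟩
  · rintro ⟨hA, hD⟩
    constructor
    · rintro ⟨i, j, k, hij, hjk, h1, h2⟩
      induction k using Fin.cases with
      | zero => exact absurd hjk (by simp [Fin.lt_def])
      | succ k =>
        induction j using Fin.cases with
        | zero => exact absurd hij (by simp [Fin.lt_def])
        | succ j =>
          induction i using Fin.cases with
          | zero =>
            simp only [Psi_zero, Psi_succ] at h1 h2
            have hv : (p : ℕ) ≤ ((e j : Fin m) : ℕ) := (lt_succAbove' p (e j)).mp h1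
            have := hD j k (by simpa using hjk) hv
            rw [Fin.succAbove_lt_succAbove_iff] at h2
            exact absurd h2 (not_lt.mpr this.le)
          | succ i =>
            simp only [Psi_succ, Fin.succAbove_lt_succAbove_iff] at h1 h2
            exact hA ⟨i, j, k, by simpa using hij, by simpa using hjk, h1, h2⟩
    · intro j k hjk hv
      induction k using Fin.cases with
      | zero => exact absurd hjk (by simp [Fin.lt_def])
      | succ k =>
        induction j using Fin.cases with
        | zero =>
          simp only [Psi_zero] at hv
          omega
        | succ j =>
          simp only [Psi_succ] at hv ⊢
          have hpj : (p : ℕ) ≤ ((e j : Fin m) : ℕ) := by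
            rcases (Fin.succAbove_ne p (e j)).lt_or_gt with h | h
            · have : ((p.succAbove (e j) : Fin (m+1)) : ℕ) < (p : ℕ) := h
              omega
            · exact (lt_succAbove' p (e j)).mp h
          rw [Fin.succAbove_lt_succAbove_iff]
          exact hD j k (by simpa using hjk) hpj

lemma good_psi_large {m t : ℕ} (p : Fin (m+1)) (e : Equiv.Perm (Fin m)) (hp : t ≤ (p : ℕ)) :
    Good t (Psi p e) ↔ ((p : ℕ) = m ∧ Good t e) := by
  have hcs : ∀ x : Fin m, (Fin.last m).succAbove x = x.castSucc := by
    intro x; rw [Fin.succAbove_last]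
  constructor
  · rintro ⟨hA, hD⟩
    have hpm : (p : ℕ) = m := by
      by_contra hc
      have hplt : p < Fin.last m := by
        rw [Fin.lt_def]; simp only [Fin.val_last]
        exact lt_of_le_of_ne (Fin.le_last p) (by simpa [Fin.ext_iff] using hc) |>.le.lt_of_ne (by simpa [Fin.ext_iff] using hc)
      obtain ⟨y, hy⟩ := Fin.exists_succAbove_eq hplt.ne'
      have := hD 0 (e.symm y).succ (Fin.succ_pos _) (by simpa using hp)
      simp only [Psi_zero, Psi_succ, Equiv.apply_symm_apply, hy] at this
      exact absurd this (not_lt.mpr hplt.le)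
    have hpl : p = Fin.last m := Fin.ext (by simpa using hpm)
    subst hpl
    refine ⟨hpm, ?_, ?_⟩
    · rintro ⟨i, j, k, hij, hjk, h1, h2⟩
      exact hA ⟨i.succ, j.succ, k.succ, by simpa using hij, by simpa using hjk,
        by simpa [Psi_succ, hcs, Fin.castSucc_lt_castSucc_iff] using h1,
        by simpa [Psi_succ, hcs, Fin.castSucc_lt_castSucc_iff] using h2⟩
    · intro j k hjk hv
      have := hD j.succ k.succ (by simpa using hjk)
        (by simpa [Psi_succ, hcs] using hv)
      simpa [Psi_succ, hcs, Fin.castSucc_lt_castSucc_iff] using this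
  · rintro ⟨hpm, hA, hD⟩
    have hpl : p = Fin.last m := Fin.ext (by simpa using hpm)
    subst hpl
    constructor
    · rintro ⟨i, j, k, hij, hjk, h1, h2⟩
      induction k using Fin.cases with
      | zero => exact absurd hjk (by simp [Fin.lt_def])
      | succ k =>
        induction j using Fin.cases with
        | zero => exact absurd hij (by simp [Fin.lt_def])
        | succ j =>
          induction i using Fin.cases with
          | zero =>
            simp only [Psi_zero, Psi_succ, hcs] at h1
            exact absurd h1 (not_lt.mpr (Fin.castSucc_lt_last (e j)).le)
          | succ i =>
            simp only [Psi_succ, hcs, Fin.castSucc_lt_castSucc_iff] at h1 h2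
            exact hA ⟨i, j, k, by simpa using hij, by simpa using hjk, h1, h2⟩
    · intro j k hjk hv
      induction k using Fin.cases with
      | zero => exact absurd hjk (by simp [Fin.lt_def])
      | succ k =>
        induction j using Fin.cases with
        | zero =>
          simp only [Psi_zero, Psi_succ, hcs]
          exact Fin.castSucc_lt_last (e k)
        | succ j =>
          simp only [Psi_succ, hcs, Fin.castSucc_lt_castSucc_iff] at hv ⊢
          exact hD j k (by simpa using hjk) hv

lemma Psi_inj {m : ℕ} (p : Fin (m+1)) : Function.Injective (Psi p) := by
  intro e e' h
  ext j
  have := congrArg (fun σ : Equiv.Perm (Fin (m+1)) => σ j.succ) h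
  simp only [Psi_succ] at this
  exact Fin.ext_iff.mpr (Fin.ext_iff.mp (Fin.succAbove_right_injective this)) |>.symm ▸
    (Fin.succAbove_right_injective this) ▸ rfl

lemma Psi_surj {m : ℕ} (p : Fin (m+1)) (π : Equiv.Perm (Fin (m+1))) (hπ : π 0 = p) :
    ∃ e, Psi p e = π := by
  set O : Option (Fin m) ≃ Option (Fin m) :=
    ((finSuccEquiv m).symm.trans π).trans (finSuccEquiv' p) with hO
  refine ⟨Equiv.removeNone O, ?_⟩
  ext x
  induction x using Fin.cases with
  | zero => simp [hπ]
  | succ j =>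
    simp only [Psi_succ]
    have hne : π j.succ ≠ p := by
      rw [← hπ]; exact fun h => absurd (Equiv.injective π h) (Fin.succ_ne_zero j)
    obtain ⟨y, hy⟩ := Fin.exists_succAbove_eq hne
    have hOj : O (some j) = some y := by
      simp [hO, finSuccEquiv_symm_some, ← hy, finSuccEquiv'_succAbove]
    have := Equiv.removeNone_some O ⟨y, hOj⟩
    rw [hOj] at this
    have hey : Equiv.removeNone O j = y := by exact Option.some_injective _ this
    rw [hey, hy]

lemma card_sigma_nat {ι : Type*} [Fintype ι] (A : ι → Type*) [∀ i, Finite (A i)] :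
    Nat.card (Σ i, A i) = ∑ i, Nat.card (A i) := by
  letI : ∀ i, Fintype (A i) := fun i => Fintype.ofFinite _
  simp [Nat.card_eq_fintype_card, Fintype.card_sigma]

noncomputable def psiEquiv {m : ℕ} (p : Fin (m+1)) (C : Equiv.Perm (Fin (m+1)) → Prop) :
    {e : Equiv.Perm (Fin m) // C (Psi p e)} ≃ {π : Equiv.Perm (Fin (m+1)) // C π ∧ π 0 = p} :=
  Equiv.ofBijective (fun x => ⟨Psi p x.1, x.2, Psi_zero p x.1⟩)
    ⟨fun a b h => Subtype.ext (Psi_inj p (congrArg Subtype.val h)),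
     fun x => by
       obtain ⟨π, hC, h0⟩ := x
       obtain ⟨e, he⟩ := Psi_surj p π h0
       exact ⟨⟨e, he ▸ hC⟩, Subtype.ext he⟩⟩

lemma N_succ_sum (m t : ℕ) :
    N (m+1) t = ∑ p : Fin (m+1), Nat.card {e : Equiv.Perm (Fin m) // Good t (Psi p e)} := by
  have h1 : N (m+1) t
      = Nat.card (Σ p : Fin (m+1), {x : {π : Equiv.Perm (Fin (m+1)) // Good t π} // x.1 0 = p}) :=
    (Nat.card_congr (Equiv.sigmaFiberEquiv (fun x : {π : Equiv.Perm (Fin (m+1)) // Good t π} => x.1 0))).symm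
  rw [h1, card_sigma_nat]
  refine Finset.sum_congr rfl fun p _ => ?_
  refine Nat.card_congr (Equiv.trans ?_ (psiEquiv p (Good t)).symm)
  exact Equiv.subtypeSubtypeEquivSubtypeInter (fun π : Equiv.Perm (Fin (m+1)) => Good t π) (fun π => π 0 = p)

lemma fiber_val {m t : ℕ} (p : Fin (m+1)) :
    Nat.card {e : Equiv.Perm (Fin m) // Good t (Psi p e)} =
      if (p:ℕ) < t then N m (p:ℕ) else if (p:ℕ) = m then N m t else 0 := by
  by_cases h : (p:ℕ) < t
  · rw [if_pos h]
    exact Nat.card_congr (Equiv.subtypeEquivRight fun e => good_psi_small p e h)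
  · rw [if_neg h]
    have h' : t ≤ (p:ℕ) := not_lt.mp h
    by_cases hm : (p:ℕ) = m
    · rw [if_pos hm]
      exact Nat.card_congr (Equiv.subtypeEquivRight fun e =>
        (good_psi_large p e h').trans (and_iff_right hm))
    · rw [if_neg hm]
      have hE : IsEmpty {e : Equiv.Perm (Fin m) // Good t (Psi p e)} :=
        ⟨fun x => hm ((good_psi_large p x.1 h').mp x.2).1⟩
      exact @Nat.card_of_isEmpty _ hE

lemma N_rec {m t : ℕ} (ht : t ≤ m) : N (m+1) t = ∑ s ∈ Finset.range (t+1), N m s := by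
  rw [N_succ_sum]
  have h1 : ∑ p : Fin (m+1), Nat.card {e : Equiv.Perm (Fin m) // Good t (Psi p e)}
      = ∑ s ∈ Finset.range (m+1), (if s < t then N m s else if s = m then N m t else 0) := by
    rw [← Fin.sum_univ_eq_sum_range]
    exact Finset.sum_congr rfl fun p _ => fiber_val p
  rw [h1, Finset.sum_range_succ]
  have h2 : (if m < t then N m m else if m = m then N m t else 0) = N m t := by
    rw [if_neg (by omega), if_pos rfl]
  rw [h2, Finset.sum_range_succ]
  congr 1
  have h3 : ∀ s ∈ Finset.range m, (if s < t then N m s else if s = m then N m t else 0)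
      = if s ∈ Finset.range t then N m s else 0 := by
    intro s hs
    simp only [Finset.mem_range] at hs ⊢
    by_cases hst : s < t
    · simp [hst]
    · rw [if_neg hst, if_neg (by omega : ¬ s = m), if_neg (by omega : ¬ s < t)]
  rw [Finset.sum_congr rfl h3, Finset.sum_ite_mem]
  congr 1
  exact Finset.inter_eq_right.mpr (Finset.range_subset_range.mpr ht)

lemma N_rec_top (m : ℕ) : N (m+1) (m+1) = ∑ s ∈ Finset.range (m+1), N m s := by
  rw [N_succ_sum]
  rw [← Fin.sum_univ_eq_sum_range]
  refine Finset.sum_congr rfl fun p _ => ?_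
  rw [fiber_val, if_pos (by omega)]

lemma N_zero (t : ℕ) : N 0 t = 1 := by
  have h : ∀ e : Equiv.Perm (Fin 0), Good t e :=
    fun e => ⟨fun ⟨i, _⟩ => i.elim0, fun j => j.elim0⟩
  rw [N, Nat.card_congr (Equiv.subtypeUnivEquiv h), Nat.card_eq_fintype_card]
  simp

lemma hockey (m r t : ℕ) :
    (∑ s ∈ Finset.range (t+1), (m+s).choose r) + m.choose (r+1) = (m+t+1).choose (r+1) := by
  induction t with
  | zero => simp [Nat.choose_succ_succ m r]
  | succ t ih =>
    rw [Finset.sum_range_succ]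
    have hp : (m+t+1+1).choose (r+1) = (m+t+1).choose r + (m+t+1).choose (r+1) :=
      Nat.choose_succ_succ _ _
    have e1 : m + (t+1) + 1 = m + t + 1 + 1 := by omega
    have e2 : m + (t+1) = m + t + 1 := by omega
    rw [e2, hp, ← ih]
    omega

lemma hockey1 (m t : ℕ) : ∑ s ∈ Finset.range (t+1), (m+s).choose m = (m+t+1).choose (m+1) := by
  have := hockey m m t
  rwa [Nat.choose_succ_self, Nat.add_zero] at this

lemma hockey2 (m t : ℕ) : ∑ s ∈ Finset.range (t+1), (m+s).choose (m+1) = (m+t+1).choose (m+2) := by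
  have := hockey m (m+1) t
  rwa [Nat.choose_eq_zero_of_lt (by omega), Nat.add_zero] at this

lemma N_closed : ∀ m t, t ≤ m → N m t + (m+t).choose (m+1) = (m+t).choose m := by
  intro m
  induction m with
  | zero => intro t ht; interval_cases t; simp [N_zero]
  | succ m ih =>
    have sumN : ∀ t ≤ m, (∑ s ∈ Finset.range (t+1), N m s) + (m+t+1).choose (m+2)
        = (m+t+1).choose (m+1) := by
      intro t ht
      have h1 : (∑ s ∈ Finset.range (t+1), N m s) + (∑ s ∈ Finset.range (t+1), (m+s).choose (m+1))
          = ∑ s ∈ Finset.range (t+1), (m+s).choose m := by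
        rw [← Finset.sum_add_distrib]
        exact Finset.sum_congr rfl fun s hs =>
          ih s (by simp only [Finset.mem_range] at hs; omega)
      rw [hockey1] at h1
      rw [hockey2] at h1
      exact h1
    intro t ht
    by_cases htm : t ≤ m
    · have := sumN t htm
      rw [N_rec htm]
      have e1 : m + 1 + t = m + t + 1 := by omega
      rw [e1]
      exact this
    · have ht1 : t = m + 1 := by omega
      subst ht1
      rw [N_rec_top]
      have h0 := sumN m le_rfl
      have hp1 : (m+m+1+1).choose (m+2) = (m+m+1).choose (m+1) + (m+m+1).choose (m+2) :=
        Nat.choose_succ_succ (m+m+1) (m+1) ▸ rfl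
      have hp2 : (m+m+1+1).choose (m+1) = (m+m+1).choose m + (m+m+1).choose (m+1) :=
        Nat.choose_succ_succ (m+m+1) m ▸ rfl
      have hsym : (m+m+1).choose m = (m+m+1).choose (m+1) := by
        have := Nat.choose_symm (by omega : m+1 ≤ m+m+1) (n := m+m+1)
        have he : m+m+1-(m+1) = m := by omega
        rw [he] at this
        exact this
      have e1 : m + 1 + (m+1) = m+m+1+1 := by omega
      rw [e1, hp1, hp2, hsym]
      have hr : ∑ s ∈ Finset.range (m+1), N m s + (m+m+1).choose (m+2) = (m+m+1).choose (m+1) := by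
        have e2 : m + m + 1 = m + m + 1 := rfl
        have := h0; rw [show m + m + 1 = m + m + 1 from rfl] at this; exact this
      omega

lemma a1_eq_N (n i : ℕ) (hi : 1 ≤ i) (hin : i ≤ n) : a1 n i = N (n-1) (i-1) := by
  obtain ⟨m, rfl⟩ : ∃ m, n = m + 1 := ⟨n - 1, by omega⟩
  set p : Fin (m+1) := ⟨i-1, by omega⟩ with hp
  have h1 : ∀ π : Equiv.Perm (Fin (m+1)),
      (Avoids123 π ∧ ∀ j : Fin (m+1), j.val = 0 → ((π j : Fin (m+1)) : ℕ) + 1 = i)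
        ↔ (Good (m+1) π ∧ π 0 = p) := by
    intro π
    constructor
    · rintro ⟨hA, hz⟩
      refine ⟨⟨hA, fun j k _ hv => absurd hv (by omega)⟩, ?_⟩
      have := hz 0 rfl
      exact Fin.ext (by simp only [hp]; omega)
    · rintro ⟨⟨hA, _⟩, h0⟩
      refine ⟨hA, fun j hj => ?_⟩
      have hj0 : j = 0 := Fin.ext hj
      rw [hj0, h0, hp]
      simp; omega
  rw [a1, Nat.card_congr (Equiv.subtypeEquivRight h1),
    Nat.card_congr (psiEquiv p (Good (m+1))).symm]
  have h2 : ∀ e : Equiv.Perm (Fin m), Good (m+1) (Psi p e) ↔ Good (i-1) e := by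
    intro e
    have : (p : ℕ) = i - 1 := rfl
    rw [good_psi_small p e (by omega), this]
  rw [Nat.card_congr (Equiv.subtypeEquivRight h2)]
  simp [N]

theorem a1_explicit (n i : ℕ) (hi : 1 ≤ i) (hin : i ≤ n) :
    a1 n i = (n + i - 2).choose (n - 1) - (n + i - 2).choose n := by
  rw [a1_eq_N n i hi hin]
  have h := N_closed (n-1) (i-1) (by omega)
  have e1 : n - 1 + (i - 1) = n + i - 2 := by omega
  have e2 : n - 1 + 1 = n := by omega
  rw [e1, e2] at h
  omega
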